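/- arXiv:1907.01672 — 3 statements merged into one kernel-verified Lean document; each statement's English description precedes it below -/
import Mathlib

section
/- Characterization of the identified set of a partial potential outcome: let ι be a finite index set, α(j) a finite set for each j ∈ ι with each α(j) containing at least two elements, X : Ω → Π_{j ∈ ι} α(j) the vector of observable random variables, i ∈ ι, S ⊆ ι, x ∈ Π_{j ∈ S} α(j), and ω ∈ Ω. Then the partial potential outcome X^i_{X^S = x} is identified at ω if and only if X(ω)(j) = x(j) for every j ∈ S; moreover, when it is identified at ω its common value is X(ω)(i). -/
/-- Observational consistency of a family `g` of complete potential outcomes for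
index `i`: whenever `X ω = v`, the complete potential outcome `g v` evaluates at `ω`
to `v i`. -/
def ObsConsistent {Ω ι : Type*} (α : ι → Type*) (X : Ω → ∀ j : ι, α j) (i : ι)
    (g : (∀ j : ι, α j) → Ω → α i) : Prop :=
  ∀ (ω : Ω) (v : ∀ j : ι, α j), X ω = v → g v ω = v i

/-- The element `x ⊕ v|_{ι \ S}` of `Π_j α j` agreeing with `x` on `S` and with `v`
off `S`. -/
def patchOn {ι : Type*} [DecidableEq ι] (α : ι → Type*) (S : Finset ι)
    (x : ∀ j : {j : ι // j ∈ S}, α j.1) (v : ∀ j : ι, α j) : ∀ j : ι, α j :=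
  fun j => if h : j ∈ S then x ⟨j, h⟩ else v j

/-- The partial potential outcome `X^i_{X^S = x}` (derived by contraction over `ι \ S`)
is identified at `ω`: every two observationally consistent families of complete
potential outcomes for index `i` give the same contracted value at `ω`. -/
def IdentifiedAt {Ω ι : Type*} [DecidableEq ι] (α : ι → Type*)
    (X : Ω → ∀ j : ι, α j) (i : ι) (S : Finset ι)
    (x : ∀ j : {j : ι // j ∈ S}, α j.1) (ω : Ω) : Prop :=
  ∀ g g' : (∀ j : ι, α j) → Ω → α i,
    ObsConsistent α X i g → ObsConsistent α X i g' →
      g (patchOn α S x (X ω)) ω = g' (patchOn α S x (X ω)) ω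

/-- Characterization of the identified set of a partial potential outcome:
`X^i_{X^S = x}` is identified at `ω` iff `X(ω)` agrees with `x` on `S`; moreover, when
it is identified at `ω` its common value is `X(ω)(i)`. -/
theorem identifiedAt_iff
    {Ω ι : Type*} [Fintype ι] [DecidableEq ι]
    (α : ι → Type*) [∀ j, Fintype (α j)] (hcard : ∀ j : ι, 2 ≤ Fintype.card (α j))
    (X : Ω → ∀ j : ι, α j) (i : ι) (S : Finset ι)
    (x : ∀ j : {j : ι // j ∈ S}, α j.1) (ω : Ω) :
    (IdentifiedAt α X i S x ω ↔ ∀ j : {j : ι // j ∈ S}, X ω j.1 = x j)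
    ∧ (∀ g : (∀ j : ι, α j) → Ω → α i, ObsConsistent α X i g →
        (∀ j : {j : ι // j ∈ S}, X ω j.1 = x j) →
          g (patchOn α S x (X ω)) ω = X ω i) := by
  have hpatch : (∀ j : {j : ι // j ∈ S}, X ω j.1 = x j) →
      patchOn α S x (X ω) = X ω := by
    intro h
    funext j
    unfold patchOn
    split
    · next hj => exact (h ⟨j, hj⟩).symm
    · rfl
  constructor
  · constructor
    · intro hid
      by_contra hne
      obtain ⟨a, b, hab⟩ : ∃ a b : α i, a ≠ b := by
        have := hcard i
        exact Fintype.exists_pair_of_one_lt_card (by omega)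
      classical
      have hXne : X ω ≠ patchOn α S x (X ω) := by
        intro heq
        apply hne
        intro j
        have := congrFun heq j.1
        simpa [patchOn, j.2] using this
      set g : (∀ j : ι, α j) → Ω → α i :=
        fun v ω' => if X ω' = v then v i else a with hg
      set g' : (∀ j : ι, α j) → Ω → α i :=
        fun v ω' => if X ω' = v then v i else b with hg'
      have hc : ObsConsistent α X i g := by
        intro ω' v h; simp [hg, h]
      have hc' : ObsConsistent α X i g' := by
        intro ω' v h; simp [hg', h]
      have := hid g g' hc hc'
      simp only [hg, hg', if_neg hXne] at this
      exact hab this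
    · intro h g g' hc hc'
      rw [hpatch h, hc ω (X ω) rfl, hc' ω (X ω) rfl]
  · intro g hc h
    rw [hpatch h]
    exact hc ω (X ω) rfl
end

section
/- Generalized fundamental problem of causal inference: let ι be a finite index set, α(j) a finite set for each j ∈ ι with each α(j) containing at least two elements, X : Ω → Π_{j ∈ ι} α(j) the vector of observable random variables, i ∈ ι, and S ⊆ ι. For x ∈ Π_{j ∈ S} α(j), let 𝒳^i_x = { ω ∈ Ω : X^i_{X^S = x} is identified at ω }. Then for any x ≠ x̃ in Π_{j ∈ S} α(j), 𝒳^i_x ∩ 𝒳^i_{x̃} = ∅. -/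
/-- If the partial potential outcome is identified at `ω`, then the observed value
`X ω` must already agree with `x` on `S`. -/
lemma identifiedAt_imp_patch_eq
    {Ω ι : Type*} [DecidableEq ι]
    (α : ι → Type*) [∀ j, Fintype (α j)] (hcard : ∀ j : ι, 2 ≤ Fintype.card (α j))
    (X : Ω → ∀ j : ι, α j) (i : ι) (S : Finset ι)
    (x : ∀ j : {j : ι // j ∈ S}, α j.1) (ω : Ω)
    (hid : IdentifiedAt α X i S x ω) : patchOn α S x (X ω) = X ω := by
  classical
  by_contra hne
  obtain ⟨b, hb⟩ := Fintype.exists_ne_of_one_lt_card (by have := hcard i; omega)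
    (patchOn α S x (X ω) i)
  set p := patchOn α S x (X ω) with hp
  have hXp : X ω ≠ p := fun h => hne h.symm
  let g : (∀ j : ι, α j) → Ω → α i := fun v _ => v i
  let g' : (∀ j : ι, α j) → Ω → α i := fun v ω' => if X ω' = v then v i else b
  have hg : ObsConsistent α X i g := fun _ _ _ => rfl
  have hg' : ObsConsistent α X i g' := fun ω' v h => by simp [g', h]
  have := hid g g' hg hg'
  simp only [g, g'] at this
  rw [if_neg hXp] at this
  exact hb this.symm

/-- Generalized fundamental problem of causal inference: the identified sets
`𝒳^i_x = {ω | X^i_{X^S = x} is identified at ω}` of distinct partial potential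
outcomes are disjoint: for `x ≠ x̃`, `𝒳^i_x ∩ 𝒳^i_{x̃} = ∅`. -/
theorem fundamental_problem_of_causal_inference
    {Ω ι : Type*} [Fintype ι] [DecidableEq ι]
    (α : ι → Type*) [∀ j, Fintype (α j)] (hcard : ∀ j : ι, 2 ≤ Fintype.card (α j))
    (X : Ω → ∀ j : ι, α j) (i : ι) (S : Finset ι)
    (x x' : ∀ j : {j : ι // j ∈ S}, α j.1) (hne : x ≠ x') :
    {ω : Ω | IdentifiedAt α X i S x ω} ∩ {ω : Ω | IdentifiedAt α X i S x' ω} = ∅ := by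
  ext ω
  simp only [Set.mem_inter_iff, Set.mem_setOf_eq, Set.mem_empty_iff_false, iff_false]
  rintro ⟨h1, h2⟩
  have e1 := identifiedAt_imp_patch_eq α hcard X i S x ω h1
  have e2 := identifiedAt_imp_patch_eq α hcard X i S x' ω h2
  apply hne
  funext j
  have c1 := congrFun e1 j.1
  have c2 := congrFun e2 j.1
  simp only [patchOn, dif_pos j.2] at c1 c2
  rw [c1, c2]
end

section
/- Under experimental randomization of X, the average observed effect of the randomized system equals the average causal effect: in the experimental randomization construction with Y₀ and Y₁ integrable with respect to P, Ẽ[Ỹ | X̃ = 1] − Ẽ[Ỹ | X̃ = 0] = E[Y₁] − E[Y₀], where Ẽ denotes expectation with respect to P ⊗ P_R and Ẽ[Ỹ | X̃ = x] = (∫_{X̃⁻¹({x})} Ỹ d(P ⊗ P_R)) / (P ⊗ P_R)({X̃ = x}). -/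
open MeasureTheory

/-- Under experimental randomization of `X`, the average observed effect of the
randomized system equals the average causal effect:
`Ẽ[Ỹ | X̃ = 1] − Ẽ[Ỹ | X̃ = 0] = E[Y₁] − E[Y₀]`, where `Ẽ` denotes expectation with
respect to `P ⊗ P_R` and `Ẽ[Ỹ | X̃ = x] = (∫_{X̃⁻¹({x})} Ỹ d(P ⊗ P_R)) / (P ⊗ P_R)({X̃ = x})`. -/
theorem randomized_aoe_eq_ace
    {Ω ΩR : Type*} [MeasurableSpace Ω] [MeasurableSpace ΩR]
    (P : Measure Ω) (PR : Measure ΩR)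
    [IsProbabilityMeasure P] [IsProbabilityMeasure PR]
    (Y0 Y1 : Ω → ℝ) (hY0 : Measurable Y0) (hY1 : Measurable Y1)
    (hY0int : Integrable Y0 P) (hY1int : Integrable Y1 P)
    (XR : ΩR → ℝ) (hXR : Measurable XR)
    (hXRbin : ∀ ωR, XR ωR = 0 ∨ XR ωR = 1)
    (hXRpos : ∀ x : ℝ, (x = 0 ∨ x = 1) → 0 < PR {ωR | XR ωR = x})
    (Xt : Ω × ΩR → ℝ) (hXt : ∀ p : Ω × ΩR, Xt p = XR p.2)
    (Yt : Ω × ΩR → ℝ)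
    (hYt0 : ∀ p : Ω × ΩR, XR p.2 = 0 → Yt p = Y0 p.1)
    (hYt1 : ∀ p : Ω × ΩR, XR p.2 = 1 → Yt p = Y1 p.1) :
    (∫ p in Xt ⁻¹' {1}, Yt p ∂(P.prod PR)) / ((P.prod PR) {p : Ω × ΩR | Xt p = 1}).toReal
      - (∫ p in Xt ⁻¹' {0}, Yt p ∂(P.prod PR)) / ((P.prod PR) {p : Ω × ΩR | Xt p = 0}).toReal
      = (∫ ω, Y1 ω ∂P) - (∫ ω, Y0 ω ∂P) := by
  have key : ∀ (x : ℝ) (f : Ω → ℝ), (x = 0 ∨ x = 1) → Measurable f → Integrable f P →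
      (∀ p : Ω × ΩR, XR p.2 = x → Yt p = f p.1) →
      (∫ p in Xt ⁻¹' {x}, Yt p ∂(P.prod PR)) / ((P.prod PR) {p : Ω × ΩR | Xt p = x}).toReal
        = ∫ ω, f ω ∂P := by
    intro x f hx hf hfi hYtf
    set S : Set ΩR := XR ⁻¹' {x} with hSdef
    have hS : MeasurableSet S := hXR (measurableSet_singleton x)
    have hSpos : PR S ≠ 0 := (hXRpos x hx).ne'
    have hSfin : PR S ≠ ⊤ := (measure_lt_top PR S).ne
    have hset : Xt ⁻¹' {x} = Set.univ ×ˢ S := by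
      ext p
      simp [hXt p, Set.mem_prod, hSdef]
    have hset' : {p : Ω × ΩR | Xt p = x} = Set.univ ×ˢ S := hset
    have hmeas : (P.prod PR) (Set.univ ×ˢ S) = PR S := by
      rw [Measure.prod_prod, measure_univ, one_mul]
    have hcong : (∫ p in Xt ⁻¹' {x}, Yt p ∂(P.prod PR))
        = ∫ p in Set.univ ×ˢ S, f p.1 ∂(P.prod PR) := by
      rw [hset]
      refine setIntegral_congr_fun (MeasurableSet.univ.prod hS) ?_
      intro p hp
      exact hYtf p hp.2
    have hrestrict : (P.prod PR).restrict (Set.univ ×ˢ S) = P.prod (PR.restrict S) := by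
      rw [← Measure.prod_restrict, Measure.restrict_univ]
    have hint : ∫ p in Set.univ ×ˢ S, f p.1 ∂(P.prod PR) = (PR S).toReal * ∫ ω, f ω ∂P := by
      rw [hrestrict]
      have hmap : (P.prod (PR.restrict S)).map Prod.fst = (PR.restrict S Set.univ) • P :=
        Measure.map_fst_prod
      have := integral_map (μ := P.prod (PR.restrict S)) (φ := Prod.fst) (f := f)
        measurable_fst.aemeasurable
        (by rw [hmap]; exact hfi.aestronglyMeasurable.smul_measure _)
      rw [← this, hmap, integral_smul_measure, Measure.restrict_apply_univ, smul_eq_mul]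
    have hne : (PR S).toReal ≠ 0 := ENNReal.toReal_ne_zero.mpr ⟨hSpos, hSfin⟩
    rw [hcong, hint, hset', hmeas, mul_comm, mul_div_assoc, div_self hne, mul_one]
  rw [key 1 Y1 (Or.inr rfl) hY1 hY1int hYt1, key 0 Y0 (Or.inl rfl) hY0 hY0int hYt0]
end
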